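/- arXiv:2502.12010 — 4 statements merged into one kernel-verified Lean document; each statement's English description precedes it below -/
import Mathlib

section
/- If a sequence of nonnegative real numbers a_0, a_1, ..., a_n is log-concave (a_i^2 ≥ a_{i-1} * a_{i+1} for all 1 ≤ i ≤ n-1) and has no internal zeros (whenever a_i > 0 and a_k > 0 with i ≤ j ≤ k, then a_j > 0), then the sequence is unimodal: there exists an index i with a_0 ≤ a_1 ≤ ... ≤ a_i ≥ a_{i+1} ≥ ... ≥ a_n. -/
/-- A nonnegative log-concave sequence with no internal zeros is unimodal. -/
theorem logConcave_no_internal_zeros_unimodal (n : ℕ) (a : ℕ → ℝ)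
    (hnonneg : ∀ i ≤ n, 0 ≤ a i)
    (hlc : ∀ i, 1 ≤ i → i ≤ n - 1 → a (i - 1) * a (i + 1) ≤ a i ^ 2)
    (hniz : ∀ i j k, i ≤ j → j ≤ k → k ≤ n → 0 < a i → 0 < a k → 0 < a j) :
    ∃ m ≤ n, (∀ j, j < m → a j ≤ a (j + 1)) ∧ (∀ j, m ≤ j → j < n → a (j + 1) ≤ a j) := by
  obtain ⟨m, hm_mem, hm_max⟩ :=
    Finset.exists_max_image (Finset.range (n + 1)) a ⟨0, by simp⟩
  simp only [Finset.mem_range, Nat.lt_succ_iff] at hm_mem hm_max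
  -- key step lemma: if a p > 0 and a (p+1) ≤ a p, the sequence keeps decreasing
  have step : ∀ p, p + 2 ≤ n → 0 < a p → a (p + 1) ≤ a p → a (p + 2) ≤ a (p + 1) := by
    intro p hpn hpos h1
    have hl := hlc (p + 1) (by omega) (by omega)
    simp only [Nat.add_sub_cancel] at hl
    nlinarith [mul_le_mul_of_nonneg_left h1 (hnonneg (p + 1) (by omega)), hl, hpos]
  refine ⟨m, hm_mem, ?_, ?_⟩
  · -- increasing before m
    intro j hj
    by_contra hcon
    push_neg at hcon
    have hjpos : 0 < a j := lt_of_le_of_lt (hnonneg (j + 1) (by omega)) hcon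
    have hmpos : 0 < a m := lt_of_lt_of_le hjpos (hm_max j (by omega))
    have chain : ∀ k, j + k + 1 ≤ m → a (j + k + 1) ≤ a (j + k) := by
      intro k
      induction k with
      | zero => intro _; exact le_of_lt hcon
      | succ k ih =>
        intro hk
        have h1 : a (j + k + 1) ≤ a (j + k) := ih (by omega)
        have hpos : 0 < a (j + k) :=
          hniz j (j + k) m (by omega) (by omega) hm_mem hjpos hmpos
        exact step (j + k) (by omega) hpos h1
    have trans : ∀ k, j + k + 1 ≤ m → a (j + k + 1) ≤ a (j + 1) := by
      intro k
      induction k with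
      | zero => intro _; exact le_refl _
      | succ k ih =>
        intro hk
        exact le_trans (chain (k + 1) hk) (ih (by omega))
    have hmle : a m ≤ a (j + 1) := by
      have := trans (m - j - 1) (by omega)
      have he : j + (m - j - 1) + 1 = m := by omega
      rwa [he] at this
    have := hm_max j (by omega)
    linarith
  · -- decreasing after m
    intro j hmj hjn
    have dchain : ∀ k, m + k < n → a (m + k + 1) ≤ a (m + k) := by
      intro k
      induction k with
      | zero => intro hk; exact hm_max (m + 1) (by omega)
      | succ k ih =>
        intro hk
        have h1 : a (m + k + 1) ≤ a (m + k) := ih (by omega)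
        rcases lt_or_eq_of_le (hnonneg (m + k) (by omega)) with hpos | hzero
        · exact step (m + k) (by omega) hpos h1
        · -- a (m+k) = 0, hence a (m+k+1) = 0, and a (m+k+2) must be 0
          have h2 : a (m + k + 1) = 0 := le_antisymm (by linarith)
            (hnonneg (m + k + 1) (by omega))
          show a (m + k + 2) ≤ a (m + k + 1)
          rw [h2]
          by_contra hcon
          push_neg at hcon
          have hmpos : 0 < a m := lt_of_lt_of_le hcon (hm_max (m + k + 2) (by omega))
          have := hniz m (m + k) (m + k + 2) (by omega) (by omega) (by omega) hmpos hcon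
          linarith
    have := dchain (j - m) (by omega)
    have he : m + (j - m) = j := by omega
    rwa [he] at this
end

section
/- Let a_0, ..., a_n be a log-concave sequence of positive real numbers (a_i^2 ≥ a_{i-1} a_{i+1} for 1 ≤ i ≤ n-1). Then the sequence d_0, ..., d_{n+1} defined by d_0 = a_0, d_{n+1} = a_n, and d_i = a_{i-1} + a_i for 1 ≤ i ≤ n is also log-concave. -/
/-- If `a` is a log-concave sequence of positive reals, then the sequence `d` with
`d 0 = a 0`, `d (n+1) = a n`, `d i = a (i-1) + a i` is log-concave. -/
theorem logConcave_of_sum_consecutive (n : ℕ) (a d : ℕ → ℝ)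
    (hpos : ∀ i ≤ n, 0 < a i)
    (halc : ∀ i, 1 ≤ i → i ≤ n - 1 → a (i - 1) * a (i + 1) ≤ a i ^ 2)
    (hd0 : d 0 = a 0) (hdn : d (n + 1) = a n)
    (hrec : ∀ i, 1 ≤ i → i ≤ n → d i = a (i - 1) + a i) :
    ∀ i, 1 ≤ i → i ≤ n → d (i - 1) * d (i + 1) ≤ d i ^ 2 := by
  intro i h1 hn
  rcases eq_or_lt_of_le h1 with h1e | h2le
  · -- i = 1
    have hi : i = 1 := h1e.symm
    subst hi
    have hd1 : d 1 = a 0 + a 1 := by simpa using hrec 1 le_rfl hn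
    have p0 : 0 < a 0 := hpos 0 (by omega)
    have p1 : 0 < a 1 := hpos 1 hn
    rcases eq_or_lt_of_le hn with hne | hnlt
    · -- n = 1
      have hd2 : d 2 = a 1 := by rw [← hne] at hdn; simpa using hdn
      simp only [Nat.sub_self, hd0, hd1, hd2]
      nlinarith
    · -- n ≥ 2
      have hd2 : d 2 = a 1 + a 2 := by simpa using hrec 2 (by omega) (by omega)
      have p2 : 0 < a 2 := hpos 2 (by omega)
      have hc : a 0 * a 2 ≤ a 1 ^ 2 := by simpa using halc 1 le_rfl (by omega)
      simp only [Nat.sub_self, hd0, hd1, hd2]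
      nlinarith
  · -- i ≥ 2
    obtain ⟨j, rfl⟩ : ∃ j, i = j + 2 := ⟨i - 2, by omega⟩
    have pj : 0 < a j := hpos j (by omega)
    have pj1 : 0 < a (j + 1) := hpos (j + 1) (by omega)
    have pj2 : 0 < a (j + 2) := hpos (j + 2) (by omega)
    have hdm : d (j + 1) = a j + a (j + 1) := by simpa using hrec (j + 1) (by omega) (by omega)
    have hdi : d (j + 2) = a (j + 1) + a (j + 2) := by
      simpa using hrec (j + 2) (by omega) (by omega)
    have hc1 : a j * a (j + 2) ≤ a (j + 1) ^ 2 := by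
      simpa using halc (j + 1) (by omega) (by omega)
    rcases eq_or_lt_of_le hn with hne | hnlt
    · -- i = n
      have hdp : d (j + 3) = a (j + 2) := by
        have := hdn; rw [← hne] at this; simpa using this
      show d (j + 1) * d (j + 3) ≤ d (j + 2) ^ 2
      rw [hdm, hdi, hdp]
      nlinarith
    · -- interior
      have pj3 : 0 < a (j + 3) := hpos (j + 3) (by omega)
      have hdp : d (j + 3) = a (j + 2) + a (j + 3) := by
        simpa using hrec (j + 3) (by omega) (by omega)
      have hc2 : a (j + 1) * a (j + 3) ≤ a (j + 2) ^ 2 := by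
        simpa using halc (j + 2) (by omega) (by omega)
      show d (j + 1) * d (j + 3) ≤ d (j + 2) ^ 2
      rw [hdm, hdi, hdp]
      nlinarith [mul_le_mul hc1 hc2 (le_of_lt (mul_pos pj1 pj3)) (sq_nonneg (a (j + 1))),
        mul_pos pj1 pj2]
end

section
/- Let G be a finite simple graph on vertex set {v_0, ..., v_n} and let A_G be the graphical arrangement in ℂ^{n+1} consisting of the hyperplanes V(x_i - x_j) for each edge {v_i, v_j} of G (with i < j). Then the chromatic polynomial of G equals the characteristic polynomial of A_G: χ_G(t) = χ_{A_G}(t). -/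
open Polynomial
open scoped Classical

/-- The intersection poset (as a finset of subspaces) of a central arrangement `B`
inside the ambient space `W`: all intersections of subsets of `B` with `W`,
the empty intersection giving `W` itself. -/
noncomputable def interPoset {N : ℕ} (W : Submodule ℂ (Fin N → ℂ))
    (B : Finset (Submodule ℂ (Fin N → ℂ))) : Finset (Submodule ℂ (Fin N → ℂ)) :=
  B.powerset.image fun S => W ⊓ S.inf id

/-- `μ` is the Möbius function of the intersection poset of the central arrangement `B`
in the ambient space `W`, ordered by reverse inclusion (so `W` is the minimum):
`μ W = 1` and `μ C = -∑_{D <_L C} μ D`, the sum being over elements of the poset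
strictly containing `C`. -/
noncomputable def IsMobius {N : ℕ} (W : Submodule ℂ (Fin N → ℂ))
    (B : Finset (Submodule ℂ (Fin N → ℂ))) (μ : Submodule ℂ (Fin N → ℂ) → ℤ) : Prop :=
  μ W = 1 ∧ ∀ C ∈ interPoset W B, C ≠ W →
    μ C = -∑ D ∈ (interPoset W B).filter (fun D => C < D), μ D

/-- The characteristic polynomial `∑_{C ∈ L} μ(C) t^{dim C}` of the central
arrangement `B` in the ambient space `W`. -/
noncomputable def charPoly {N : ℕ} (W : Submodule ℂ (Fin N → ℂ))
    (B : Finset (Submodule ℂ (Fin N → ℂ))) (μ : Submodule ℂ (Fin N → ℂ) → ℤ) :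
    Polynomial ℤ :=
  ∑ C ∈ interPoset W B, Polynomial.C (μ C) * X ^ (Module.finrank ℂ C)

/-- The number of proper colorings of `G` with `t` colors. -/
noncomputable def properCount {V : Type*} (G : SimpleGraph V) (t : ℕ) : ℕ :=
  Nat.card {f : V → Fin t // ∀ a b, G.Adj a b → f a ≠ f b}

/-- the injection of colors into ℂ -/
noncomputable def iotaC (t : ℕ) : Fin t → ℂ := fun k => ((k : ℕ) : ℂ)

lemma iotaC_injective (t : ℕ) : Function.Injective (iotaC t) :=
  fun a b h => Fin.val_injective (Nat.cast_injective h)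

/-- the setoid on coordinates induced by a subspace -/
def relSetoid {N : ℕ} (C : Submodule ℂ (Fin N → ℂ)) : Setoid (Fin N) :=
  ⟨fun a b => ∀ y ∈ C, y a = y b,
   ⟨fun _ _ _ => rfl, fun h y hy => (h y hy).symm,
    fun h1 h2 y hy => (h1 y hy).trans (h2 y hy)⟩⟩

lemma mem_ker_proj_sub_iff {N : ℕ} (i j : Fin N) (x : Fin N → ℂ) :
    x ∈ LinearMap.ker ((LinearMap.proj i : (Fin N → ℂ) →ₗ[ℂ] ℂ)
      - (LinearMap.proj j : (Fin N → ℂ) →ₗ[ℂ] ℂ)) ↔ x i = x j := by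
  simp [LinearMap.mem_ker, sub_eq_zero]

lemma mem_of_interPoset_iff {N : ℕ} {A : Finset (Submodule ℂ (Fin N → ℂ))}
    (hAker : ∀ K ∈ A, ∃ i j : Fin N, K = LinearMap.ker
      ((LinearMap.proj i : (Fin N → ℂ) →ₗ[ℂ] ℂ) - (LinearMap.proj j : (Fin N → ℂ) →ₗ[ℂ] ℂ)))
    {C : Submodule ℂ (Fin N → ℂ)} (hC : C ∈ interPoset ⊤ A) (x : Fin N → ℂ) :
    x ∈ C ↔ ∀ a b : Fin N, (relSetoid C).r a b → x a = x b := by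
  constructor
  · exact fun hx a b hab => hab x hx
  · intro h
    obtain ⟨S, hS, rfl⟩ := Finset.mem_image.mp hC
    rw [Finset.mem_powerset] at hS
    refine Submodule.mem_inf.mpr ⟨trivial, Submodule.mem_finsetInf.mpr fun K hK => ?_⟩
    obtain ⟨i, j, rfl⟩ := hAker K (hS hK)
    have hrel : (relSetoid (⊤ ⊓ S.inf id)).r i j := by
      intro y hy
      have : y ∈ S.inf id := (Submodule.mem_inf.mp hy).2
      exact (mem_ker_proj_sub_iff i j y).mp (Submodule.mem_finsetInf.mp this _ hK)
    exact (mem_ker_proj_sub_iff i j x).mpr (h i j hrel)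

lemma finrank_interPoset {N : ℕ} {A : Finset (Submodule ℂ (Fin N → ℂ))}
    (hAker : ∀ K ∈ A, ∃ i j : Fin N, K = LinearMap.ker
      ((LinearMap.proj i : (Fin N → ℂ) →ₗ[ℂ] ℂ) - (LinearMap.proj j : (Fin N → ℂ) →ₗ[ℂ] ℂ)))
    {C : Submodule ℂ (Fin N → ℂ)} (hC : C ∈ interPoset ⊤ A) :
    Module.finrank ℂ C = Fintype.card (Quotient (relSetoid C)) := by
  set s := relSetoid C with hs
  have hsurj : Function.Surjective (Quotient.mk s) := fun q => q.inductionOn fun a => ⟨a, rfl⟩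
  set φ : (Quotient s → ℂ) →ₗ[ℂ] (Fin N → ℂ) := LinearMap.funLeft ℂ ℂ (Quotient.mk s) with hφ
  have hinj : Function.Injective φ := LinearMap.funLeft_injective_of_surjective ℂ ℂ _ hsurj
  have hrange : LinearMap.range φ = C := by
    ext x
    rw [mem_of_interPoset_iff hAker hC x]
    constructor
    · rintro ⟨g, rfl⟩ a b hab
      show g (Quotient.mk s a) = g (Quotient.mk s b)
      rw [Quotient.sound hab]
    · intro h
      refine ⟨Quotient.lift x h, ?_⟩
      funext a
      rfl
  rw [← hrange, LinearMap.finrank_range_of_inj hinj, Module.finrank_fintype_fun_eq_card]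

lemma card_grid {N t : ℕ} {A : Finset (Submodule ℂ (Fin N → ℂ))}
    (hAker : ∀ K ∈ A, ∃ i j : Fin N, K = LinearMap.ker
      ((LinearMap.proj i : (Fin N → ℂ) →ₗ[ℂ] ℂ) - (LinearMap.proj j : (Fin N → ℂ) →ₗ[ℂ] ℂ)))
    {C : Submodule ℂ (Fin N → ℂ)} (hC : C ∈ interPoset ⊤ A) :
    (Finset.univ.filter fun f : Fin N → Fin t => iotaC t ∘ f ∈ C).card
      = t ^ Module.finrank ℂ C := by
  set s := relSetoid C with hs
  have e : {f : Fin N → Fin t // iotaC t ∘ f ∈ C} ≃ (Quotient s → Fin t) :=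
    { toFun := fun x => Quotient.lift x.1 (fun a b hab =>
        iotaC_injective t (hab (iotaC t ∘ x.1) x.2))
      invFun := fun g => ⟨g ∘ Quotient.mk s, by
        rw [mem_of_interPoset_iff hAker hC]
        intro a b hab
        show iotaC t (g (Quotient.mk s a)) = iotaC t (g (Quotient.mk s b))
        rw [Quotient.sound hab]⟩
      left_inv := fun x => Subtype.ext (funext fun a => rfl)
      right_inv := fun g => funext fun q => q.inductionOn fun a => rfl }
  rw [finrank_interPoset hAker hC, ← Fintype.card_subtype, Fintype.card_congr e,
    Fintype.card_fun, Fintype.card_fin]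


/-- The chromatic polynomial of a finite simple graph `G` on vertices
`{0, …, n}` coincides with the characteristic polynomial of the graphical
arrangement `A_G` of the hyperplanes `V(x_i - x_j)`, `{i,j}` an edge of `G`,
in `ℂ^{n+1}`. -/
theorem chromatic_eq_charPoly_graphical (n : ℕ) (G : SimpleGraph (Fin (n + 1)))
    (A : Finset (Submodule ℂ (Fin (n + 1) → ℂ)))
    (hA : A = (Finset.univ.filter fun p : Fin (n + 1) × Fin (n + 1) => G.Adj p.1 p.2).image
      fun p => LinearMap.ker
        ((LinearMap.proj p.1 : (Fin (n + 1) → ℂ) →ₗ[ℂ] ℂ)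
          - (LinearMap.proj p.2 : (Fin (n + 1) → ℂ) →ₗ[ℂ] ℂ)))
    (μ : Submodule ℂ (Fin (n + 1) → ℂ) → ℤ) (hμ : IsMobius ⊤ A μ) :
    ∀ t : ℕ, (properCount G t : ℤ) = (charPoly ⊤ A μ).eval (t : ℤ) := by
  intro t
  -- every element of A is a kernel, with adjacency
  have hAadj : ∀ K ∈ A, ∃ i j : Fin (n + 1), G.Adj i j ∧ K = LinearMap.ker
      ((LinearMap.proj i : (Fin (n + 1) → ℂ) →ₗ[ℂ] ℂ) - (LinearMap.proj j : (Fin (n + 1) → ℂ) →ₗ[ℂ] ℂ)) := by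
    intro K hK
    rw [hA, Finset.mem_image] at hK
    obtain ⟨p, hp, rfl⟩ := hK
    exact ⟨p.1, p.2, (Finset.mem_filter.mp hp).2, rfl⟩
  have hAker : ∀ K ∈ A, ∃ i j : Fin (n + 1), K = LinearMap.ker
      ((LinearMap.proj i : (Fin (n + 1) → ℂ) →ₗ[ℂ] ℂ) - (LinearMap.proj j : (Fin (n + 1) → ℂ) →ₗ[ℂ] ℂ)) :=
    fun K hK => by obtain ⟨i, j, _, h⟩ := hAadj K hK; exact ⟨i, j, h⟩
  have hK_ne_top : ∀ K ∈ A, K ≠ ⊤ := by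
    intro K hK
    obtain ⟨i, j, hadj, rfl⟩ := hAadj K hK
    intro htop
    have : (Pi.single i 1 : Fin (n + 1) → ℂ) ∈ LinearMap.ker
        ((LinearMap.proj i : (Fin (n + 1) → ℂ) →ₗ[ℂ] ℂ) - (LinearMap.proj j : (Fin (n + 1) → ℂ) →ₗ[ℂ] ℂ)) := by
      rw [htop]; trivial
    rw [mem_ker_proj_sub_iff] at this
    simp [Pi.single_eq_same, Pi.single_eq_of_ne (Ne.symm hadj.ne)] at this
  set L := interPoset (⊤ : Submodule ℂ (Fin (n + 1) → ℂ)) A with hL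
  have htopL : (⊤ : Submodule ℂ (Fin (n + 1) → ℂ)) ∈ L := by
    refine Finset.mem_image.mpr ⟨∅, Finset.empty_mem_powerset A, ?_⟩
    simp
  set ι := iotaC t
  set E : (Fin (n + 1) → Fin t) → Submodule ℂ (Fin (n + 1) → ℂ) :=
    fun f => ⊤ ⊓ (A.filter fun K => ι ∘ f ∈ K).inf id with hE
  have hEL : ∀ f, E f ∈ L :=
    fun f => Finset.mem_image.mpr ⟨_, Finset.mem_powerset.mpr (Finset.filter_subset _ _), rfl⟩
  have hmemE : ∀ f, ι ∘ f ∈ E f := by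
    intro f
    refine Submodule.mem_inf.mpr ⟨trivial, Submodule.mem_finsetInf.mpr fun K hK => ?_⟩
    exact (Finset.mem_filter.mp hK).2
  have hEle : ∀ (f : Fin (n + 1) → Fin t), ∀ C ∈ L, (ι ∘ f ∈ C ↔ E f ≤ C) := by
    intro f C hC
    constructor
    · intro hx
      obtain ⟨S, hS, rfl⟩ := Finset.mem_image.mp hC
      rw [Finset.mem_powerset] at hS
      refine inf_le_inf_left ⊤ (Finset.inf_mono ?_)
      intro K hK
      refine Finset.mem_filter.mpr ⟨hS hK, ?_⟩
      exact Submodule.mem_finsetInf.mp (Submodule.mem_inf.mp hx).2 K hK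
    · intro h
      exact h (hmemE f)
  have hEtop : ∀ f : Fin (n + 1) → Fin t, (E f = ⊤ ↔ ∀ a b, G.Adj a b → f a ≠ f b) := by
    intro f
    constructor
    · intro htop a b hadj hfab
      set K := LinearMap.ker ((LinearMap.proj a : (Fin (n + 1) → ℂ) →ₗ[ℂ] ℂ)
        - (LinearMap.proj b : (Fin (n + 1) → ℂ) →ₗ[ℂ] ℂ)) with hKdef
      have hKA : K ∈ A := by
        rw [hA, Finset.mem_image]
        exact ⟨(a, b), Finset.mem_filter.mpr ⟨Finset.mem_univ _, hadj⟩, rfl⟩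
      have hmem : ι ∘ f ∈ K := by
        rw [hKdef, mem_ker_proj_sub_iff]
        show ι (f a) = ι (f b)
        rw [hfab]
      have hle : E f ≤ K := by
        refine le_trans inf_le_right (Finset.inf_le ?_)
        exact Finset.mem_filter.mpr ⟨hKA, hmem⟩
      rw [htop, top_le_iff] at hle
      exact hK_ne_top K hKA hle
    · intro hproper
      have : (A.filter fun K => ι ∘ f ∈ K) = ∅ := by
        refine Finset.eq_empty_iff_forall_notMem.mpr fun K hK => ?_
        obtain ⟨hKA, hmem⟩ := Finset.mem_filter.mp hK
        obtain ⟨i, j, hadj, rfl⟩ := hAadj K hKA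
        rw [mem_ker_proj_sub_iff] at hmem
        exact hproper i j hadj (iotaC_injective t hmem)
      simp only [hE, this, Finset.inf_empty, inf_top_eq]
  -- the key Mobius identity
  have hkey : ∀ D ∈ L, (∑ C ∈ L.filter (fun C => D ≤ C), μ C)
      = if D = ⊤ then 1 else 0 := by
    intro D hD
    by_cases hDt : D = ⊤
    · subst hDt
      have : L.filter (fun C => (⊤ : Submodule ℂ (Fin (n + 1) → ℂ)) ≤ C) = {⊤} := by
        ext C
        simp only [Finset.mem_filter, Finset.mem_singleton, top_le_iff]
        constructor
        · exact fun h => h.2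
        · rintro rfl; exact ⟨htopL, rfl⟩
      rw [this, Finset.sum_singleton, if_pos rfl]
      exact hμ.1
    · rw [if_neg hDt]
      have hsplit : L.filter (fun C => D ≤ C)
          = insert D (L.filter (fun C => D < C)) := by
        ext C
        simp only [Finset.mem_filter, Finset.mem_insert]
        constructor
        · rintro ⟨hC, hle⟩
          rcases eq_or_lt_of_le hle with h | h
          · exact Or.inl h.symm
          · exact Or.inr ⟨hC, h⟩
        · rintro (rfl | ⟨hC, hlt⟩)
          · exact ⟨hD, le_rfl⟩
          · exact ⟨hC, le_of_lt hlt⟩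
      have hnotmem : D ∉ L.filter (fun C => D < C) := by
        simp only [Finset.mem_filter, lt_self_iff_false, and_false, not_false_iff]
      have hμ2 : μ D = -∑ C ∈ L.filter (fun C => D < C), μ C := hμ.2 D hD hDt
      rw [hsplit, Finset.sum_insert hnotmem, hμ2]
      ring
  -- the main computation
  have step1 : (charPoly ⊤ A μ).eval (t : ℤ)
      = ∑ C ∈ L, μ C * ((Finset.univ.filter fun f : Fin (n + 1) → Fin t => E f ≤ C).card : ℤ) := by
    rw [charPoly]
    rw [eval_finset_sum]
    refine Finset.sum_congr rfl fun C hC => ?_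
    rw [eval_mul, eval_C, eval_pow, eval_X]
    congr 1
    have : (Finset.univ.filter fun f : Fin (n + 1) → Fin t => E f ≤ C)
        = (Finset.univ.filter fun f : Fin (n + 1) → Fin t => ι ∘ f ∈ C) := by
      exact Finset.filter_congr fun f _ => (hEle f C hC).symm
    rw [this, card_grid hAker hC]
    push_cast
    ring
  rw [step1]
  have step2 : ∑ C ∈ L, μ C * ((Finset.univ.filter fun f : Fin (n + 1) → Fin t => E f ≤ C).card : ℤ)
      = ∑ f : Fin (n + 1) → Fin t, ∑ C ∈ L.filter (fun C => E f ≤ C), μ C := by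
    have : ∀ C ∈ L, μ C * ((Finset.univ.filter fun f : Fin (n + 1) → Fin t => E f ≤ C).card : ℤ)
        = ∑ f : Fin (n + 1) → Fin t, if E f ≤ C then μ C else 0 := by
      intro C _
      rw [← Finset.sum_filter, Finset.sum_const, nsmul_eq_mul, mul_comm]
    rw [Finset.sum_congr rfl this, Finset.sum_comm]
    refine Finset.sum_congr rfl fun f _ => ?_
    rw [Finset.sum_filter]
  rw [step2]
  have step3 : ∀ f : Fin (n + 1) → Fin t, (∑ C ∈ L.filter (fun C => E f ≤ C), μ C)
      = if E f = ⊤ then (1 : ℤ) else 0 := fun f => hkey (E f) (hEL f)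
  rw [Finset.sum_congr rfl fun f _ => step3 f, Finset.sum_boole]
  have step4 : (Finset.univ.filter fun f : Fin (n + 1) → Fin t => E f = ⊤)
      = (Finset.univ.filter fun f : Fin (n + 1) → Fin t => ∀ a b, G.Adj a b → f a ≠ f b) := by
    exact Finset.filter_congr fun f _ => hEtop f
  rw [step4]
  congr 1
  rw [properCount]
  rw [Nat.card_eq_fintype_card, Fintype.card_subtype]
end

section
/- Let χ_G(t) be the chromatic polynomial of a finite simple graph G on n+1 vertices. Then χ_G(t) = ∑_{i=0}^{n+1} (-1)^{n+1-i} b_i t^i, where all b_i are nonnegative integers; i.e., the coefficients of χ_G alternate in sign. -/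
/-!
Deletion–contraction: for an edge `ab`, colorings of `G - ab` split into those with
`c a ≠ c b` (the colorings of `G`) and those with `c a = c b` (the colorings of `G / ab`), so
`χ_G = χ_{G-ab} - χ_{G/ab}`. Both graphs have fewer edges, `G - ab` has the same `d` vertices and
`G / ab` has `d - 1`. If the coefficient of `t^i` in `χ_{G-ab}` has sign `(-1)^(d-i)` and that in
`χ_{G/ab}` has sign `(-1)^(d-1-i)`, then subtracting the latter adds magnitudes with the same sign
pattern. The induction on the number of edges bottoms out at the edgeless graph, with `χ = t^d`.
-/

open Finset

def HasAlternatingCoeffs (d : ℕ) (f : ℕ → ℤ) : Prop :=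
  ∃ b : ℕ → ℕ, ∀ t : ℕ, f t = ∑ i ∈ range (d + 1), (-1) ^ (d - i) * (b i : ℤ) * (t : ℤ) ^ i

theorem hasAlternatingCoeffs_pow (d : ℕ) : HasAlternatingCoeffs d fun t => (t : ℤ) ^ d := by
  refine ⟨Pi.single d 1, fun t => ?_⟩
  rw [sum_eq_single_of_mem d (self_mem_range_succ d) fun i _ hi => by simp [hi]]
  simp

theorem HasAlternatingCoeffs.sub {d : ℕ} {f g : ℕ → ℤ} (hf : HasAlternatingCoeffs (d + 1) f)
    (hg : HasAlternatingCoeffs d g) : HasAlternatingCoeffs (d + 1) (f - g) := by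
  obtain ⟨bf, hbf⟩ := hf
  obtain ⟨bg, hbg⟩ := hg
  refine ⟨fun i => bf i + if i ≤ d then bg i else 0, fun t => ?_⟩
  have hsign : ∀ i ∈ range (d + 1), -((-1 : ℤ) ^ (d - i)) = (-1) ^ (d + 1 - i) := fun i hi => by
    rw [Nat.sub_add_comm (Nat.le_of_lt_succ (mem_range.mp hi)), pow_succ, mul_neg_one]
  simp only [Pi.sub_apply, hbf t, hbg t, Nat.cast_add, Nat.cast_ite, Nat.cast_zero, mul_add,
    add_mul, sum_add_distrib, sub_eq_add_neg, ← sum_neg_distrib]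
  congr 1
  rw [sum_range_succ _ (d + 1), if_neg (Nat.not_succ_le_self d), mul_zero, zero_mul, add_zero]
  refine sum_congr rfl fun i hi => ?_
  rw [if_pos (Nat.le_of_lt_succ (mem_range.mp hi)), ← hsign i hi]
  ring

theorem Nat.card_subtype_eq_card_and_add_card_and_not {α : Type*} [Finite α] (p q : α → Prop) :
    Nat.card {x // p x} = Nat.card {x // p x ∧ q x} + Nat.card {x // p x ∧ ¬q x} := by
  classical
  rw [← Nat.card_sum]
  exact Nat.card_congr ((Equiv.sumCongr (Equiv.subtypeSubtypeEquivSubtypeInter p q)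
    (Equiv.subtypeSubtypeEquivSubtypeInter p fun x => ¬q x)).symm.trans (Equiv.sumCompl _)).symm

theorem Nat.card_subtype_ne_add_one {α : Type*} [Finite α] (b : α) :
    Nat.card {x // x ≠ b} + 1 = Nat.card α := by
  classical
  rw [← Finite.card_option, Nat.card_congr (Equiv.optionSubtypeNe b)]

namespace SimpleGraph

variable {V W : Type*}

theorem map_proper_iff (G : SimpleGraph V) (f : V → W) {α : Type*} (c : W → α) :
    (∀ x y, (G.map f).Adj x y → c x ≠ c y) ↔
      ∀ u v, G.Adj u v → f u ≠ f v → c (f u) ≠ c (f v) := by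
  constructor
  · exact fun hc u v huv hf => hc _ _ ⟨hf, u, v, huv, rfl, rfl⟩
  · rintro hc _ _ ⟨hf, u, v, huv, rfl, rfl⟩
    exact hc u v huv hf

theorem ncard_edgeSet_map_lt [Finite V] (G : SimpleGraph V) (f : V → W) {a b : V}
    (hab : G.Adj a b) (hf : f a = f b) : (G.map f).edgeSet.ncard < G.edgeSet.ncard := by
  have hsub : (G.map f).edgeSet ⊂ Sym2.map f '' G.edgeSet := by
    refine ⟨fun e he => ?_, fun h => ?_⟩
    · induction e using Sym2.ind with
      | _ x y =>
        obtain ⟨-, u, v, huv, rfl, rfl⟩ := he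
        exact ⟨s(u, v), huv, rfl⟩
    · have := h ⟨s(a, b), hab, by rw [Sym2.map_mk, hf]⟩
      exact (G.map f).not_isDiag_of_mem_edgeSet this (Sym2.mk_isDiag_iff.mpr rfl)
  exact (Set.ncard_lt_ncard hsub).trans_le Set.ncard_image_le

theorem properCount_bot [Finite V] (t : ℕ) :
    properCount (⊥ : SimpleGraph V) t = t ^ Nat.card V := by
  rw [properCount, Nat.card_congr (Equiv.subtypeUnivEquiv fun _ _ _ h => h.elim), Nat.card_fun,
    Nat.card_fin]

theorem deleteEdges_proper_iff (G : SimpleGraph V) (a b : V) {α : Type*} (c : V → α) :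
    (∀ x y, (G.deleteEdges {s(a, b)}).Adj x y → c x ≠ c y) ↔
      ∀ u v, G.Adj u v → s(u, v) ≠ s(a, b) → c u ≠ c v := by
  simp only [deleteEdges_adj, Set.mem_singleton_iff, and_imp]

theorem proper_iff_deleteEdges_proper_and_ne (G : SimpleGraph V) {a b : V} (hab : G.Adj a b)
    {α : Type*} (c : V → α) :
    (∀ x y, G.Adj x y → c x ≠ c y) ↔
      (∀ x y, (G.deleteEdges {s(a, b)}).Adj x y → c x ≠ c y) ∧ c a ≠ c b := by
  rw [deleteEdges_proper_iff]
  refine ⟨fun hc => ⟨fun u v huv _ => hc u v huv, hc a b hab⟩, fun ⟨hc, hne⟩ u v huv => ?_⟩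
  by_cases he : s(u, v) = s(a, b)
  · rcases Sym2.eq_iff.mp he with ⟨rfl, rfl⟩ | ⟨rfl, rfl⟩
    exacts [hne, hne.symm]
  · exact hc u v huv he

section Contraction

variable [DecidableEq V] {a b : V}

/-- The contraction `G / ab` lives on `{x // x ≠ b}`; this map sends `b` to `a`. -/
def mergeVertex (hab : a ≠ b) (x : V) : {x : V // x ≠ b} :=
  if h : x = b then ⟨a, hab⟩ else ⟨x, h⟩

theorem mergeVertex_val (hab : a ≠ b) (x : {x : V // x ≠ b}) : mergeVertex hab x = x :=
  dif_neg x.2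

theorem mergeVertex_eq_mergeVertex_iff (hab : a ≠ b) {u v : V} (huv : u ≠ v) :
    mergeVertex hab u = mergeVertex hab v ↔ s(u, v) = s(a, b) := by
  unfold mergeVertex
  split_ifs <;> grind [Subtype.ext_iff, Sym2.eq_iff]

theorem apply_mergeVertex {α : Type*} (hab : a ≠ b) {c : V → α} (hc : c a = c b) (x : V) :
    c (mergeVertex hab x) = c x := by
  unfold mergeVertex
  split_ifs with hx
  · rw [hx, hc]
  · rfl

theorem mergeVertex_left_eq_right (hab : a ≠ b) : mergeVertex hab a = mergeVertex hab b :=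
  (mergeVertex_eq_mergeVertex_iff hab hab).mpr rfl

def contractEdge (G : SimpleGraph V) (hab : a ≠ b) : SimpleGraph {x : V // x ≠ b} :=
  G.map (mergeVertex hab)

theorem card_proper_contractEdge (G : SimpleGraph V) (hab : a ≠ b) (α : Type*) :
    Nat.card {g : {x : V // x ≠ b} → α // ∀ x y, (G.contractEdge hab).Adj x y → g x ≠ g y} =
      Nat.card {c : V → α //
        (∀ x y, (G.deleteEdges {s(a, b)}).Adj x y → c x ≠ c y) ∧ c a = c b} := by
  refine Nat.card_congr
    { toFun g := ⟨g.1 ∘ mergeVertex hab, ?_, ?_⟩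
      invFun c := ⟨c.1 ∘ Subtype.val, ?_⟩
      left_inv g := ?_
      right_inv c := ?_ }
  · rw [deleteEdges_proper_iff]
    exact fun u v huv he => (map_proper_iff G _ g.1).mp g.2 u v huv
      ((mergeVertex_eq_mergeVertex_iff hab huv.ne).not.mpr he)
  · exact congrArg g.1 (mergeVertex_left_eq_right hab)
  · refine (map_proper_iff G _ _).mpr fun u v huv hne => ?_
    simp only [Function.comp_apply, apply_mergeVertex hab c.2.2]
    exact (deleteEdges_proper_iff G a b c.1).mp c.2.1 u v huv
      ((mergeVertex_eq_mergeVertex_iff hab huv.ne).not.mp hne)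
  · exact Subtype.ext (funext fun x => congrArg g.1 (mergeVertex_val hab x))
  · exact Subtype.ext (funext (apply_mergeVertex hab c.2.2))

theorem properCount_deleteEdges [Finite V] (G : SimpleGraph V) (hab : G.Adj a b) (t : ℕ) :
    properCount (G.deleteEdges {s(a, b)}) t =
      properCount G t + properCount (G.contractEdge hab.ne) t := by
  unfold properCount
  rw [Nat.card_subtype_eq_card_and_add_card_and_not _ fun c : V → Fin t => c a = c b, add_comm,
    card_proper_contractEdge]
  congr 1
  exact Nat.card_congr (Equiv.subtypeEquivRight fun c =>
    (proper_iff_deleteEdges_proper_and_ne G hab c).symm)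

end Contraction

theorem properCount_hasAlternatingCoeffs [Finite V] (G : SimpleGraph V) :
    HasAlternatingCoeffs (Nat.card V) fun t => properCount G t := by
  classical
  induction hm : G.edgeSet.ncard using Nat.strong_induction_on generalizing V with
  | _ m ih =>
  obtain rfl | hG := eq_or_ne G ⊥
  · simpa only [properCount_bot, Nat.cast_pow] using hasAlternatingCoeffs_pow (Nat.card V)
  obtain ⟨a, b, hab⟩ := ne_bot_iff_exists_adj.mp hG
  have hdel_lt : (G.deleteEdges {s(a, b)}).edgeSet.ncard < m := by
    rw [← hm, edgeSet_deleteEdges]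
    exact Set.ncard_sdiff_singleton_lt_of_mem hab
  have hcon_lt : (G.contractEdge hab.ne).edgeSet.ncard < m :=
    hm ▸ ncard_edgeSet_map_lt G _ hab (mergeVertex_left_eq_right hab.ne)
  have hdel := ih _ hdel_lt (G.deleteEdges {s(a, b)}) rfl
  have hcon := ih _ hcon_lt (G.contractEdge hab.ne) rfl
  rw [← Nat.card_subtype_ne_add_one b] at hdel ⊢
  convert hdel.sub hcon using 1
  funext t
  simp only [Pi.sub_apply, properCount_deleteEdges G hab t, Nat.cast_add, add_sub_cancel_right]

end SimpleGraph

/-- The coefficients of the chromatic polynomial of a finite simple graph on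
`n+1` vertices alternate in sign: `χ_G(t) = ∑ (-1)^{n+1-i} b_i t^i` with the
`b_i` nonnegative integers. -/
theorem chromatic_coefficients_alternate (n : ℕ) (V : Type*) [Fintype V]
    (G : SimpleGraph V) (hV : Fintype.card V = n + 1) :
    ∃ b : ℕ → ℕ, ∀ t : ℕ,
      (properCount G t : ℤ)
        = ∑ i ∈ Finset.range (n + 2), (-1) ^ (n + 1 - i) * (b i : ℤ) * (t : ℤ) ^ i := by
  have h := G.properCount_hasAlternatingCoeffs
  rwa [Nat.card_eq_fintype_card, hV] at h
end
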